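/- arXiv:1004.5235 — 2 statements merged into one kernel-verified Lean document; each statement's English description precedes it below -/
import Mathlib

section
/- Let k be a commutative ring, H a Hopf algebra over k with bijective antipode S (with inverse S̄), and A a right H-comodule algebra with coaction ρ(a)=a_[0]⊗a_[1]. Then there is an isomorphism of k-linear categories γ: C'_A → C_A which is the identity on the two objects 1, 2 and sends a morphism f' to f'∘S; its inverse functor sends f to f∘S̄. In particular γ maps each hom-module C'_A(i,j) bijectively onto C_A(i,j) and satisfies γ(f'⋆g') = γ(f')*γ(g'). -/
open TensorProduct Coalgebra HopfAlgebra LinearMap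

noncomputable section

universe u

variable {k : Type u} [CommRing k]
variable {H : Type u} [Ring H] [HopfAlgebra k H]
variable {A : Type u} [Ring A] [Algebra k A]

/-- The coaction `ρ` is coassociative and counital. -/
def IsCoaction (ρ : A →ₗ[k] A ⊗[k] H) : Prop :=
  (∀ a, ρ.rTensor H (ρ a) =
      (TensorProduct.assoc k A H H).symm ((Coalgebra.comul (R := k) (A := H)).lTensor A (ρ a))) ∧
  (∀ a, (TensorProduct.rid k A) ((Coalgebra.counit (R := k) (A := H)).lTensor A (ρ a)) = a)

/-- The coinvariant subalgebra `B = A^{co H}` of a comodule algebra. -/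
def coinv (ρ : A →ₐ[k] A ⊗[k] H) : Subalgebra k A where
  carrier := {a | ρ a = a ⊗ₜ[k] (1 : H)}
  one_mem' := by
    show ρ 1 = (1 : A) ⊗ₜ[k] (1 : H)
    rw [map_one, Algebra.TensorProduct.one_def]
  mul_mem' := by
    intro a b ha hb
    show ρ (a * b) = (a * b) ⊗ₜ[k] (1 : H)
    rw [map_mul, ha, hb, Algebra.TensorProduct.tmul_mul_tmul, one_mul]
  add_mem' := by
    intro a b ha hb
    show ρ (a + b) = (a + b) ⊗ₜ[k] (1 : H)
    rw [map_add, ha, hb, TensorProduct.add_tmul]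
  zero_mem' := by
    show ρ 0 = (0 : A) ⊗ₜ[k] (1 : H)
    rw [map_zero, TensorProduct.zero_tmul]
  algebraMap_mem' := by
    intro r
    show ρ (algebraMap k A r) = (algebraMap k A r) ⊗ₜ[k] (1 : H)
    rw [AlgHom.commutes, Algebra.TensorProduct.algebraMap_apply]

/-- Convolution product on `Hom(H, A)`. -/
def conv (f g : H →ₗ[k] A) : H →ₗ[k] A :=
  (LinearMap.mul' k A) ∘ₗ (TensorProduct.map f g) ∘ₗ Coalgebra.comul

/-- Opposite convolution product `(f ⋆ g)(h) = f(h₍₂₎) g(h₍₁₎)`. -/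
def convOp (f g : H →ₗ[k] A) : H →ₗ[k] A :=
  (LinearMap.mul' k A) ∘ₗ (TensorProduct.map f g) ∘ₗ
    (TensorProduct.comm k H H).toLinearMap ∘ₗ Coalgebra.comul

/-- The rearranged iterated comultiplication `h ↦ h₍₂₎ ⊗ (h₍₁₎ ⊗ h₍₃₎)`. -/
def sweedler213 : H →ₗ[k] H ⊗[k] (H ⊗[k] H) :=
  (TensorProduct.assoc k H H H).toLinearMap
    ∘ₗ (((TensorProduct.comm k H H).toLinearMap).rTensor H)
    ∘ₗ (TensorProduct.assoc k H H H).symm.toLinearMap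
    ∘ₗ ((Coalgebra.comul (R := k) (A := H)).lTensor H) ∘ₗ Coalgebra.comul

/-- `v ∈ C_A(1,1) = Hom(H, B)`, i.e. `ρ(v(h)) = v(h) ⊗ 1`. -/
def memC11 (ρ : A →ₗ[k] A ⊗[k] H) (v : H →ₗ[k] A) : Prop :=
  ∀ h, ρ (v h) = v h ⊗ₜ[k] (1 : H)

/-- `t ∈ C_A(2,1) = Hom^H(H, A)`, i.e. `ρ(t(h)) = t(h₍₁₎) ⊗ h₍₂₎`. -/
def memC21 (ρ : A →ₗ[k] A ⊗[k] H) (t : H →ₗ[k] A) : Prop :=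
  ∀ h, ρ (t h) = TensorProduct.map t LinearMap.id (Coalgebra.comul h)

/-- `u ∈ C_A(1,2)`, i.e. `ρ(u(h)) = u(h₍₂₎) ⊗ S(h₍₁₎)`. -/
def memC12 (ρ : A →ₗ[k] A ⊗[k] H) (u : H →ₗ[k] A) : Prop :=
  ∀ h, ρ (u h) =
    TensorProduct.map u (HopfAlgebra.antipode (R := k))
      ((TensorProduct.comm k H H) (Coalgebra.comul h))

/-- `w ∈ C_A(2,2)`, i.e. `ρ(w(h)) = w(h₍₂₎) ⊗ S(h₍₁₎) h₍₃₎`. -/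
def memC22 (ρ : A →ₗ[k] A ⊗[k] H) (w : H →ₗ[k] A) : Prop :=
  ∀ h, ρ (w h) =
    TensorProduct.map w
      ((LinearMap.mul' k H) ∘ₗ TensorProduct.map (HopfAlgebra.antipode (R := k)) LinearMap.id)
      (sweedler213 h)

/-- `u' ∈ C'_A(2,1)`, i.e. `ρ(u'(h)) = u'(h₍₂₎) ⊗ S̄(h₍₁₎)`. -/
def memC'21 (ρ : A →ₗ[k] A ⊗[k] H) (Sbar : H →ₗ[k] H) (u' : H →ₗ[k] A) : Prop :=
  ∀ h, ρ (u' h) =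
    TensorProduct.map u' Sbar ((TensorProduct.comm k H H) (Coalgebra.comul h))

/-- `w' ∈ C'_A(2,2)`, i.e. `ρ(w'(h)) = w'(h₍₂₎) ⊗ h₍₃₎ S̄(h₍₁₎)`. -/
def memC'22 (ρ : A →ₗ[k] A ⊗[k] H) (Sbar : H →ₗ[k] H) (w' : H →ₗ[k] A) : Prop :=
  ∀ h, ρ (w' h) =
    TensorProduct.map w'
      ((LinearMap.mul' k H) ∘ₗ (TensorProduct.map LinearMap.id Sbar) ∘ₗ
        (TensorProduct.comm k H H).toLinearMap)
      (sweedler213 h)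

end

/-!
The antipode `S` reverses comultiplication, `Δ (S h) = S h₂ ⊗ S h₁`: in the convolution algebra
`Hom(H, H ⊗ H)` both `Δ ∘ S` and `(S ⊗ S) ∘ τ ∘ Δ` are inverse to `Δ`. Hence its inverse `S̄`
reverses comultiplication too. Precomposing with a comultiplication-reversing map reverses the
Sweedler indices, which turns the opposite convolution into the convolution and each defining
condition of a hom-module of `C'_A` into that of `C_A` (and back, for `S̄`), up to factors
`S̄ S = id` and `S S̄ = id` in the second tensor slot.
-/

open WithConv

section ReversesComul

variable {R C : Type*} [CommSemiring R] [AddCommMonoid C] [Module R C] [CoalgebraStruct R C]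

def ReversesComul (T : C →ₗ[R] C) : Prop :=
  comul ∘ₗ T = map T T ∘ₗ (TensorProduct.comm R C C).toLinearMap ∘ₗ comul

theorem ReversesComul.of_comp_eq_id {T T' : C →ₗ[R] C} (hT : ReversesComul T)
    (hTT' : T ∘ₗ T' = .id) (hT'T : T' ∘ₗ T = .id) : ReversesComul T' := by
  have hid : map T' T' ∘ₗ (TensorProduct.comm R C C).toLinearMap ∘ₗ map T T ∘ₗ
      (TensorProduct.comm R C C).toLinearMap = .id := by
    ext x y
    simp [← LinearMap.comp_apply (f := T'), hT'T]
  calc comul ∘ₗ T'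
      = (map T' T' ∘ₗ (TensorProduct.comm R C C).toLinearMap ∘ₗ map T T ∘ₗ
          (TensorProduct.comm R C C).toLinearMap) ∘ₗ comul ∘ₗ T' := by rw [hid, id_comp]
    _ = map T' T' ∘ₗ (TensorProduct.comm R C C).toLinearMap ∘ₗ (map T T ∘ₗ
          (TensorProduct.comm R C C).toLinearMap ∘ₗ comul) ∘ₗ T' := by simp only [comp_assoc]
    _ = map T' T' ∘ₗ (TensorProduct.comm R C C).toLinearMap ∘ₗ comul := by
        rw [← hT, comp_assoc, hTT', comp_id]

end ReversesComul

namespace HopfAlgebra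

variable {R H : Type*} [CommSemiring R] [Semiring H] [HopfAlgebra R H]

theorem antipode_tensor_comm_comul_convMul_comul :
    toConv (map (antipode R) (antipode R) ∘ₗ (TensorProduct.comm R H H).toLinearMap ∘ₗ comul) *
      toConv (comul (R := R) (A := H)) = 1 := by
  have hS : mul' R H ∘ₗ map (antipode R) .id ∘ₗ comul = Algebra.linearMap R H ∘ₗ counit := by
    simpa [LinearMap.rTensor_def] using mul_antipode_rTensor_comul (R := R) (A := H)
  simp only [LinearMap.convMul_def, LinearMap.convOne_def, mul'_tensor, coassoc_simps, hS]
  congr 1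
  set g : H ⊗[R] H →ₗ[R] H :=
    mul' R H ∘ₗ map (antipode R) .id ∘ₗ (TensorProduct.comm R H H).toLinearMap
  trans map (Algebra.linearMap R H) g ∘ₗ (TensorProduct.assoc R R H H).toLinearMap ∘ₗ
      map (map counit .id ∘ₗ comul) .id ∘ₗ (TensorProduct.comm R H H).toLinearMap ∘ₗ comul
  · simp only [coassoc_simps]
  -- contract the now isolated `(ε ⊗ id) ∘ Δ`
  rw [CoassocSimps.map_counit_comp_comul_left]
  simp only [coassoc_simps, g, hS]
  ext h
  simp [Algebra.algebraMap_eq_smul_one, Algebra.TensorProduct.one_def]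

theorem reversesComul_antipode : ReversesComul (antipode R (A := H)) := by
  have := left_inv_eq_right_inv (M := WithConv (H →ₗ[R] H ⊗[R] H))
    antipode_tensor_comm_comul_convMul_comul comul_right_inv
  exact (congrArg ofConv this).symm

end HopfAlgebra

section Transport

variable {k H A : Type u} [CommRing k] [Ring H] [HopfAlgebra k H] [Ring A] [Algebra k A]
  {ρ : A →ₗ[k] A ⊗[k] H} {T T' : H →ₗ[k] H}

theorem ReversesComul.sweedler213_comp (hT : ReversesComul T) :
    sweedler213 ∘ₗ T =
      map T ((TensorProduct.comm k H H).toLinearMap ∘ₗ map T T) ∘ₗ sweedler213 := by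
  unfold ReversesComul at hT
  simp only [sweedler213, coassoc_simps, hT]

theorem ReversesComul.convOp_comp (hT : ReversesComul T) (f g : H →ₗ[k] A) :
    convOp f g ∘ₗ T = conv (f ∘ₗ T) (g ∘ₗ T) := by
  unfold ReversesComul at hT
  simp only [convOp, conv, coassoc_simps, hT]

theorem memC11_comp {v : H →ₗ[k] A} (hv : memC11 ρ v) (T : H →ₗ[k] H) :
    memC11 ρ (v ∘ₗ T) :=
  fun h => hv (T h)

theorem memC21_iff {t : H →ₗ[k] A} : memC21 ρ t ↔ ρ ∘ₗ t = map t .id ∘ₗ comul := by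
  simp only [memC21, LinearMap.ext_iff, comp_apply]

theorem memC12_iff {u : H →ₗ[k] A} :
    memC12 ρ u ↔ ρ ∘ₗ u =
      map u (antipode k) ∘ₗ (TensorProduct.comm k H H).toLinearMap ∘ₗ comul := by
  simp only [memC12, LinearMap.ext_iff, comp_apply, LinearEquiv.coe_coe]

theorem memC22_iff {w : H →ₗ[k] A} :
    memC22 ρ w ↔ ρ ∘ₗ w = map w (mul' k H ∘ₗ map (antipode k) .id) ∘ₗ sweedler213 := by
  simp only [memC22, LinearMap.ext_iff, comp_apply]

theorem memC'21_iff {u : H →ₗ[k] A} :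
    memC'21 ρ T u ↔ ρ ∘ₗ u =
      map u T ∘ₗ (TensorProduct.comm k H H).toLinearMap ∘ₗ comul := by
  simp only [memC'21, LinearMap.ext_iff, comp_apply, LinearEquiv.coe_coe]

theorem memC'22_iff {w : H →ₗ[k] A} :
    memC'22 ρ T w ↔ ρ ∘ₗ w = map w (mul' k H ∘ₗ map .id T ∘ₗ
      (TensorProduct.comm k H H).toLinearMap) ∘ₗ sweedler213 := by
  simp only [memC'22, LinearMap.ext_iff, comp_apply]

theorem memC'21_comp_of_memC21 {t : H →ₗ[k] A} (hT : ReversesComul T) (ht : memC21 ρ t) :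
    memC'21 ρ T (t ∘ₗ T) := by
  unfold ReversesComul at hT
  rw [memC21_iff] at ht
  rw [memC'21_iff, ← comp_assoc, ht]
  simp only [coassoc_simps, hT]

theorem memC21_comp_of_memC'21 {u : H →ₗ[k] A} (hT : ReversesComul T) (hT'T : T' ∘ₗ T = .id)
    (hu : memC'21 ρ T' u) : memC21 ρ (u ∘ₗ T) := by
  unfold ReversesComul at hT
  rw [memC'21_iff] at hu
  rw [memC21_iff, ← comp_assoc, hu]
  simp only [coassoc_simps, hT, hT'T]

theorem memC22_comp_of_memC'22 {w : H →ₗ[k] A} (hTS : T ∘ₗ antipode k = .id)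
    (hw : memC'22 ρ T w) : memC22 ρ (w ∘ₗ antipode k) := by
  rw [memC'22_iff] at hw
  rw [memC22_iff, ← comp_assoc, hw, comp_assoc,
    HopfAlgebra.reversesComul_antipode.sweedler213_comp]
  simp only [coassoc_simps, hTS]

theorem memC'22_comp_of_memC22 {w : H →ₗ[k] A} (hT : ReversesComul T)
    (hST : antipode k ∘ₗ T = .id) (hw : memC22 ρ w) : memC'22 ρ T (w ∘ₗ T) := by
  rw [memC22_iff] at hw
  rw [memC'22_iff, ← comp_assoc, hw, comp_assoc, hT.sweedler213_comp]
  simp only [coassoc_simps, hST]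

end Transport

theorem stmt0_gamma_category_isomorphism_general
    {k H A : Type u} [CommRing k] [Ring H] [HopfAlgebra k H] [Ring A] [Algebra k A]
    (ρ : A →ₐ[k] A ⊗[k] H)
    (Sbar : H →ₗ[k] H)
    (hS1 : ∀ h, HopfAlgebra.antipode (R := k) (Sbar h) = h)
    (hS2 : ∀ h, Sbar (HopfAlgebra.antipode (R := k) h) = h) :
    -- `γ` maps each hom-module of `C'_A` into the corresponding hom-module of `C_A`
    (∀ v' : H →ₗ[k] A, memC11 ρ.toLinearMap v' →
        memC11 ρ.toLinearMap (v' ∘ₗ HopfAlgebra.antipode (R := k))) ∧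
    (∀ t' : H →ₗ[k] A, memC21 ρ.toLinearMap t' →
        memC12 ρ.toLinearMap (t' ∘ₗ HopfAlgebra.antipode (R := k))) ∧
    (∀ u' : H →ₗ[k] A, memC'21 ρ.toLinearMap Sbar u' →
        memC21 ρ.toLinearMap (u' ∘ₗ HopfAlgebra.antipode (R := k))) ∧
    (∀ w' : H →ₗ[k] A, memC'22 ρ.toLinearMap Sbar w' →
        memC22 ρ.toLinearMap (w' ∘ₗ HopfAlgebra.antipode (R := k))) ∧
    -- the inverse functor `f ↦ f ∘ S̄` maps each hom-module of `C_A` into that of `C'_A`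
    (∀ v : H →ₗ[k] A, memC11 ρ.toLinearMap v → memC11 ρ.toLinearMap (v ∘ₗ Sbar)) ∧
    (∀ u : H →ₗ[k] A, memC12 ρ.toLinearMap u → memC21 ρ.toLinearMap (u ∘ₗ Sbar)) ∧
    (∀ t : H →ₗ[k] A, memC21 ρ.toLinearMap t → memC'21 ρ.toLinearMap Sbar (t ∘ₗ Sbar)) ∧
    (∀ w : H →ₗ[k] A, memC22 ρ.toLinearMap w → memC'22 ρ.toLinearMap Sbar (w ∘ₗ Sbar)) ∧
    -- the two functors are mutually inverse (hence `γ` is bijective on each hom-module)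
    (∀ f : H →ₗ[k] A, (f ∘ₗ HopfAlgebra.antipode (R := k)) ∘ₗ Sbar = f) ∧
    (∀ f : H →ₗ[k] A, (f ∘ₗ Sbar) ∘ₗ HopfAlgebra.antipode (R := k) = f) ∧
    -- `γ` is functorial: `γ(g' ⋆ f') = γ(g') * γ(f')`
    (∀ f' g' : H →ₗ[k] A,
        (convOp g' f') ∘ₗ HopfAlgebra.antipode (R := k) =
          conv (g' ∘ₗ HopfAlgebra.antipode (R := k)) (f' ∘ₗ HopfAlgebra.antipode (R := k))) ∧
    -- `γ` preserves the identity morphisms `η ∘ ε`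
    ((Algebra.linearMap k A ∘ₗ Coalgebra.counit (R := k) (A := H)) ∘ₗ
          HopfAlgebra.antipode (R := k) =
        Algebra.linearMap k A ∘ₗ Coalgebra.counit (R := k) (A := H)) := by
  have hS : ReversesComul (antipode k (A := H)) := HopfAlgebra.reversesComul_antipode
  have hSSbar : antipode k ∘ₗ Sbar = .id := LinearMap.ext hS1
  have hSbarS : Sbar ∘ₗ antipode k = .id := LinearMap.ext hS2
  have hSbar : ReversesComul Sbar := hS.of_comp_eq_id hSSbar hSbarS
  -- `memC12 ρ` is `memC'21 ρ S` by definition.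
  exact ⟨fun v hv => memC11_comp hv _,
    fun t ht => memC'21_comp_of_memC21 hS ht,
    fun u hu => memC21_comp_of_memC'21 hS hSbarS hu,
    fun w hw => memC22_comp_of_memC'22 hSbarS hw,
    fun v hv => memC11_comp hv _,
    fun u hu => memC21_comp_of_memC'21 hSbar hSSbar hu,
    fun t ht => memC'21_comp_of_memC21 hSbar ht,
    fun w hw => memC'22_comp_of_memC22 hSbar hSSbar hw,
    fun f => by rw [comp_assoc, hSSbar, comp_id],
    fun f => by rw [comp_assoc, hSbarS, comp_id],
    fun f g => hS.convOp_comp g f,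
    by rw [comp_assoc, counit_comp_antipode]⟩

/-- Proposition 2.1: for a right `H`-comodule algebra `A` over a Hopf algebra
`H` with bijective antipode `S` (inverse `S̄`), the assignment `γ(f') = f' ∘ S` is an isomorphism
of `k`-linear categories `C'_A → C_A`, the identity on objects, with inverse `f ↦ f ∘ S̄`; in
particular it maps each hom-module `C'_A(i,j)` bijectively onto `C_A(i,j)` and satisfies
`γ(f' ⋆ g') = γ(f') * γ(g')`. -/
theorem stmt0_gamma_category_isomorphism
    {k H A : Type u} [CommRing k] [Ring H] [HopfAlgebra k H] [Ring A] [Algebra k A]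
    (ρ : A →ₐ[k] A ⊗[k] H) (hρ : IsCoaction ρ.toLinearMap)
    (Sbar : H →ₗ[k] H)
    (hS1 : ∀ h, HopfAlgebra.antipode (R := k) (Sbar h) = h)
    (hS2 : ∀ h, Sbar (HopfAlgebra.antipode (R := k) h) = h) :
    -- `γ` maps each hom-module of `C'_A` into the corresponding hom-module of `C_A`
    (∀ v' : H →ₗ[k] A, memC11 ρ.toLinearMap v' →
        memC11 ρ.toLinearMap (v' ∘ₗ HopfAlgebra.antipode (R := k))) ∧
    (∀ t' : H →ₗ[k] A, memC21 ρ.toLinearMap t' →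
        memC12 ρ.toLinearMap (t' ∘ₗ HopfAlgebra.antipode (R := k))) ∧
    (∀ u' : H →ₗ[k] A, memC'21 ρ.toLinearMap Sbar u' →
        memC21 ρ.toLinearMap (u' ∘ₗ HopfAlgebra.antipode (R := k))) ∧
    (∀ w' : H →ₗ[k] A, memC'22 ρ.toLinearMap Sbar w' →
        memC22 ρ.toLinearMap (w' ∘ₗ HopfAlgebra.antipode (R := k))) ∧
    -- the inverse functor `f ↦ f ∘ S̄` maps each hom-module of `C_A` into that of `C'_A`
    (∀ v : H →ₗ[k] A, memC11 ρ.toLinearMap v → memC11 ρ.toLinearMap (v ∘ₗ Sbar)) ∧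
    (∀ u : H →ₗ[k] A, memC12 ρ.toLinearMap u → memC21 ρ.toLinearMap (u ∘ₗ Sbar)) ∧
    (∀ t : H →ₗ[k] A, memC21 ρ.toLinearMap t → memC'21 ρ.toLinearMap Sbar (t ∘ₗ Sbar)) ∧
    (∀ w : H →ₗ[k] A, memC22 ρ.toLinearMap w → memC'22 ρ.toLinearMap Sbar (w ∘ₗ Sbar)) ∧
    -- the two functors are mutually inverse (hence `γ` is bijective on each hom-module)
    (∀ f : H →ₗ[k] A, (f ∘ₗ HopfAlgebra.antipode (R := k)) ∘ₗ Sbar = f) ∧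
    (∀ f : H →ₗ[k] A, (f ∘ₗ Sbar) ∘ₗ HopfAlgebra.antipode (R := k) = f) ∧
    -- `γ` is functorial: `γ(g' ⋆ f') = γ(g') * γ(f')`
    (∀ f' g' : H →ₗ[k] A,
        (convOp g' f') ∘ₗ HopfAlgebra.antipode (R := k) =
          conv (g' ∘ₗ HopfAlgebra.antipode (R := k)) (f' ∘ₗ HopfAlgebra.antipode (R := k))) ∧
    -- `γ` preserves the identity morphisms `η ∘ ε`
    ((Algebra.linearMap k A ∘ₗ Coalgebra.counit (R := k) (A := H)) ∘ₗ
          HopfAlgebra.antipode (R := k) =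
        Algebra.linearMap k A ∘ₗ Coalgebra.counit (R := k) (A := H)) :=
  stmt0_gamma_category_isomorphism_general ρ Sbar hS1 hS2
end

section
/- Let H be a cocommutative Hopf algebra, A a cleft right H-comodule algebra whose coinvariant algebra B=A^{coH} is commutative. For a convolution invertible t∈Hom^H(H,A) with convolution inverse u, define ω_t: H⊗B→B by ω_t(h⊗b)=t(h_(1))b u(h_(2)). Then ω_t indeed takes values in B, is independent of the choice of the convolution invertible H-colinear map t, and makes B into a left H-module algebra. -/
open TensorProduct Coalgebra HopfAlgebra LinearMap

/-!
All maps live in convolution algebras `Hom(C, A)`. Composition with `ρ` is multiplicative, and for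
cocommutative `C` so is `(f, g) ↦ (c ↦ f(c₁) ⊗ g(c₂))`. Hence `ρ ∘ t = t ⊗ id` forces
`ρ ∘ u = u ⊗ S`, and then `ρ ∘ (t ⋆ bε ⋆ u) = (t ⋆ bε ⋆ u) ⊗ (id ⋆ S) = (t ⋆ bε ⋆ u) ⊗ 1`, so `ω_t`
is `B`-valued. For a second cleaving map `t₁`, `v = u ⋆ t₁` is `B`-valued, and `B`-valued maps
commute with `bε` because `B` is commutative and `H` cocommutative; so
`t₁ ⋆ bε ⋆ u₁ = t ⋆ v ⋆ bε ⋆ v⁻¹ ⋆ u = t ⋆ bε ⋆ u`. The same argument over the coalgebra `H ⊗ H`,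
with multiplication `H ⊗ H → H` in place of `id`, applies to the two cleaving maps
`x ⊗ y ↦ t(x) t(y)` and `x ⊗ y ↦ t(xy)` and gives `ω(x, ω(y, b)) = ω(xy, b)`.
-/

noncomputable section

open WithConv

section Convolution

variable {k C A D : Type*} [CommSemiring k] [AddCommMonoid C] [Module k C] [Coalgebra k C]
  [Semiring A] [Algebra k A] [Semiring D] [Algebra k D]

theorem convMul_toSpanSingleton_comp_counit_apply (f : WithConv (C →ₗ[k] A)) (a : A) (c : C) :
    (f * toConv (toSpanSingleton k A a ∘ₗ counit) : WithConv (C →ₗ[k] A)) c = f c * a := by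
  simp [LinearMap.convMul_def, ← map_comp_lTensor]

variable (k C) in
def constConv : A →ₐ[k] WithConv (C →ₗ[k] A) where
  toFun a := toConv (toSpanSingleton k A a ∘ₗ counit)
  map_one' := by ext; simp [Algebra.algebraMap_eq_smul_one]
  map_mul' a b := by ext c; rw [convMul_toSpanSingleton_comp_counit_apply]; simp
  map_zero' := by ext; simp
  map_add' a b := by ext; simp
  commutes' r := by ext; simp [Algebra.algebraMap_eq_smul_one, smul_smul, mul_comm]

theorem constConv_apply (a : A) (c : C) : constConv k C a c = counit (R := k) c • a := rfl

theorem convMul_constConv_apply (f : WithConv (C →ₗ[k] A)) (a : A) (c : C) :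
    (f * constConv k C a) c = f c * a :=
  convMul_toSpanSingleton_comp_counit_apply f a c

theorem convMul_constConv_convMul_apply (f g : WithConv (C →ₗ[k] A)) (a : A) {c : C} {ι : Type*}
    (r : Coalgebra.Repr k c ι) :
    (f * constConv k C a * g) c = ∑ i ∈ r.index, f (r.left i) * a * g (r.right i) := by
  simp only [r.convMul_apply, convMul_constConv_apply]

theorem convMul_constConv_mul_convMul {t u : WithConv (C →ₗ[k] A)} (hut : u * t = 1) (a b : A) :
    t * constConv k C (a * b) * u = (t * constConv k C a * u) * (t * constConv k C b * u) := by
  rw [map_mul]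
  simp only [mul_assoc]
  rw [← mul_assoc u t, hut, one_mul]

theorem convMul_apply_one {B : Type*} [Semiring B] [Bialgebra k B] (f g : WithConv (B →ₗ[k] A)) :
    (f * g) 1 = f 1 * g 1 := by
  simp [Bialgebra.comul_one, Algebra.TensorProduct.one_def]

theorem convMul_comm_of_commute [IsCocomm k C] {f g : WithConv (C →ₗ[k] A)}
    (h : ∀ x y, Commute (f x) (g y)) : f * g = g * f := by
  ext c
  conv_rhs => rw [convMul_apply, ← comm_comul k c]
  rw [convMul_apply, ← (ℛ k c).eq]
  simp [map_sum, (h _ _).eq]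

def convTensor (f : WithConv (C →ₗ[k] A)) (g : WithConv (C →ₗ[k] D)) :
    WithConv (C →ₗ[k] A ⊗[k] D) :=
  toConv (map f.ofConv g.ofConv ∘ₗ comul)

open Algebra.TensorProduct in
theorem convTensor_eq_convMul (f : WithConv (C →ₗ[k] A)) (g : WithConv (C →ₗ[k] D)) :
    convTensor f g = toConv (includeLeft.toLinearMap ∘ₗ f.ofConv) *
      toConv ((includeRight : D →ₐ[k] A ⊗[k] D).toLinearMap ∘ₗ g.ofConv) := by
  ext c
  rw [(ℛ k c).convMul_apply, convTensor, ofConv_toConv, comp_apply, ← (ℛ k c).eq]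
  simp

variable (k C) in
def convMap (φ : A →ₐ[k] D) : WithConv (C →ₗ[k] A) →+* WithConv (C →ₗ[k] D) where
  toFun f := toConv (φ.toLinearMap ∘ₗ f.ofConv)
  map_one' := by ext; simp
  map_mul' f g := by rw [algHom_comp_convMul_distrib]
  map_zero' := by ext; simp
  map_add' f g := by ext; simp

theorem convMap_apply (φ : A →ₐ[k] D) (f : WithConv (C →ₗ[k] A)) (c : C) :
    convMap k C φ f c = φ (f c) := rfl

def convComap {B : Type*} [AddCommMonoid B] [Module k B] [Coalgebra k B] (p : B →ₗc[k] C) :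
    WithConv (C →ₗ[k] A) →+* WithConv (B →ₗ[k] A) where
  toFun f := toConv (f.ofConv ∘ₗ p.toLinearMap)
  map_one' := by ext; simp
  map_mul' f g := by rw [convMul_comp_coalgHom_distrib]
  map_zero' := by ext; simp
  map_add' f g := by ext; simp

open Algebra.TensorProduct in
theorem convTensor_mul_convTensor [IsCocomm k C] (f f' : WithConv (C →ₗ[k] A))
    (g g' : WithConv (C →ₗ[k] D)) :
    convTensor f g * convTensor f' g' = convTensor (f * f') (g * g') := by
  have hswap : toConv ((includeRight : D →ₐ[k] A ⊗[k] D).toLinearMap ∘ₗ g.ofConv) *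
      toConv (includeLeft.toLinearMap ∘ₗ f'.ofConv) =
      toConv (includeLeft.toLinearMap ∘ₗ f'.ofConv) *
      toConv ((includeRight : D →ₐ[k] A ⊗[k] D).toLinearMap ∘ₗ g.ofConv) :=
    convMul_comm_of_commute fun x y => by simp [commute_iff_eq, tmul_mul_tmul]
  simp only [convTensor_eq_convMul, algHom_comp_convMul_distrib, toConv_ofConv, mul_assoc]
  rw [← mul_assoc _ _ (toConv (_ ∘ₗ g'.ofConv)), hswap, mul_assoc]

theorem convTensor_one_right (f : WithConv (C →ₗ[k] A)) :
    convTensor f (1 : WithConv (C →ₗ[k] D)) = convMap k C Algebra.TensorProduct.includeLeft f := by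
  rw [convTensor_eq_convMul]
  change _ * convMap k C Algebra.TensorProduct.includeRight 1 = _
  rw [map_one, mul_one]
  rfl

theorem convTensor_one_one :
    convTensor (1 : WithConv (C →ₗ[k] A)) (1 : WithConv (C →ₗ[k] D)) = 1 := by
  rw [convTensor_one_right, map_one]

theorem convComap_convTensor {B : Type*} [AddCommMonoid B] [Module k B] [Coalgebra k B]
    (p : B →ₗc[k] C) (f : WithConv (C →ₗ[k] A)) (g : WithConv (C →ₗ[k] D)) :
    convComap p (convTensor f g) = convTensor (convComap p f) (convComap p g) := by
  ext b
  simp [convComap, convTensor, ← CoalgHomClass.map_comp_comul_apply, map_map]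

theorem convComap_constConv {B : Type*} [AddCommMonoid B] [Module k B] [Coalgebra k B]
    (p : B →ₗc[k] C) (a : A) : convComap p (constConv k C a) = constConv k B a := by
  ext b
  simp [convComap, constConv_apply]

end Convolution

section Coinvariants

variable {k A H : Type u} [CommRing k] [Ring A] [Algebra k A] [Ring H] [HopfAlgebra k H]
  {C : Type*} [AddCommMonoid C] [Module k C] [Coalgebra k C] {ρ : A →ₐ[k] A ⊗[k] H}

theorem forall_mem_coinv_iff {f : WithConv (C →ₗ[k] A)} :
    (∀ c, f c ∈ coinv ρ) ↔ convMap k C ρ f = convTensor f 1 := by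
  rw [convTensor_one_right, WithConv.ext_iff, LinearMap.ext_iff]
  rfl

theorem convMul_comm_of_forall_mem_coinv [IsCocomm k C]
    (hB : ∀ b b' : coinv ρ, b * b' = b' * b) {f g : WithConv (C →ₗ[k] A)}
    (hf : ∀ c, f c ∈ coinv ρ) (hg : ∀ c, g c ∈ coinv ρ) : f * g = g * f :=
  convMul_comm_of_commute fun x y => congrArg Subtype.val (hB ⟨_, hf x⟩ ⟨_, hg y⟩)

theorem constConv_mem_coinv {a : A} (ha : a ∈ coinv ρ) (c : C) : constConv k C a c ∈ coinv ρ :=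
  Subalgebra.smul_mem _ ha _

variable [IsCocomm k C] (φ : (WithConv (C →ₗ[k] H))ˣ) {t u : WithConv (C →ₗ[k] A)}

theorem convMap_eq_convTensor_inv (ht : convMap k C ρ t = convTensor t φ) (htu : t * u = 1)
    (hut : u * t = 1) : convMap k C ρ u = convTensor u (↑φ⁻¹ : WithConv (C →ₗ[k] H)) := by
  have hright : convTensor t φ * convTensor u (↑φ⁻¹ : WithConv (C →ₗ[k] H)) = 1 := by
    rw [convTensor_mul_convTensor, htu, φ.mul_inv, convTensor_one_one]
  have hleft : convMap k C ρ u * convTensor t φ = 1 := by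
    rw [← ht, ← map_mul, hut, map_one]
  exact left_inv_eq_right_inv hleft hright

theorem convMul_convMul_mem_coinv (ht : convMap k C ρ t = convTensor t φ) (htu : t * u = 1)
    (hut : u * t = 1) {x : WithConv (C →ₗ[k] A)} (hx : ∀ c, x c ∈ coinv ρ) :
    ∀ c, (t * x * u) c ∈ coinv ρ := by
  rw [forall_mem_coinv_iff] at hx ⊢
  rw [map_mul, map_mul, ht, hx, convMap_eq_convTensor_inv φ ht htu hut,
    convTensor_mul_convTensor, convTensor_mul_convTensor, mul_one, φ.mul_inv]

theorem convMul_convMul_eq_of_convMap_eq (hB : ∀ b b' : coinv ρ, b * b' = b' * b)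
    (ht : convMap k C ρ t = convTensor t φ) (htu : t * u = 1) (hut : u * t = 1)
    {t₁ u₁ : WithConv (C →ₗ[k] A)} (ht₁ : convMap k C ρ t₁ = convTensor t₁ φ)
    (htu₁ : t₁ * u₁ = 1) {x : WithConv (C →ₗ[k] A)} (hx : ∀ c, x c ∈ coinv ρ) :
    t₁ * x * u₁ = t * x * u := by
  -- `t₁ = t * v` with `v` coinvariant-valued, and `v` has the right inverse `u₁ * t`
  set v := u * t₁
  have hv : ∀ c, v c ∈ coinv ρ := by
    rw [forall_mem_coinv_iff, map_mul, convMap_eq_convTensor_inv φ ht htu hut, ht₁,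
      convTensor_mul_convTensor, φ.inv_mul]
  have hvv : v * (u₁ * t) = 1 := by
    rw [mul_assoc, ← mul_assoc t₁, htu₁, one_mul, hut]
  calc t₁ * x * u₁ = t * u * t₁ * x * (u₁ * (t * u)) := by rw [htu, one_mul, mul_one]
    _ = t * (v * x) * (u₁ * t) * u := by simp only [v, mul_assoc]
    _ = t * x * (v * (u₁ * t)) * u := by
      rw [convMul_comm_of_forall_mem_coinv hB hv hx]; simp only [mul_assoc]
    _ = t * x * u := by rw [hvv, mul_one]

end Coinvariants

section TensorSquare

variable {k C A : Type*} [CommSemiring k] [AddCommMonoid C] [Module k C] [Coalgebra k C]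
  [Semiring A] [Algebra k A]

theorem convMul_apply_tmul {D : Type*} [AddCommMonoid D] [Module k D] [Coalgebra k D]
    (f g : WithConv (C ⊗[k] D →ₗ[k] A)) (x : C) (y : D) :
    (f * g) (x ⊗ₜ y) = ∑ i ∈ (ℛ k x).index, ∑ j ∈ (ℛ k y).index,
      f ((ℛ k x).left i ⊗ₜ (ℛ k y).left j) * g ((ℛ k x).right i ⊗ₜ (ℛ k y).right j) := by
  simp [TensorProduct.comul_tmul, ← (ℛ k x).eq, ← (ℛ k y).eq, TensorProduct.sum_tmul,
    TensorProduct.tmul_sum, Finset.sum_comm (s := (ℛ k y).index)]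

theorem mul'_map_convMul_mul'_map_comm {t u : WithConv (C →ₗ[k] A)} (htu : t * u = 1) :
    toConv (mul' k A ∘ₗ map t.ofConv t.ofConv) *
      toConv (mul' k A ∘ₗ map u.ofConv u.ofConv ∘ₗ (TensorProduct.comm k C C).toLinearMap) = 1 := by
  have htu' (c : C) : ∑ i ∈ (ℛ k c).index, t ((ℛ k c).left i) * u ((ℛ k c).right i) =
      algebraMap k A (counit c) := by
    rw [← (ℛ k c).convMul_apply, htu, convOne_apply]
  refine WithConv.ext (TensorProduct.ext' fun x y => ?_)
  simp only [convMul_apply_tmul, comp_apply, LinearEquiv.coe_coe, comm_tmul,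
    map_tmul, mul'_apply, convOne_apply, counit_tmul, smul_eq_mul, map_mul]
  simp_rw [mul_assoc, ← Finset.mul_sum, ← mul_assoc, ← Finset.sum_mul, htu',
    Algebra.left_comm, ← Finset.mul_sum, htu']

theorem convMap_mul'_map {H : Type*} [Semiring H] [Algebra k H] {ρ : A →ₐ[k] A ⊗[k] H}
    {t : WithConv (C →ₗ[k] A)} {φ : WithConv (C →ₗ[k] H)} (ht : convMap k C ρ t = convTensor t φ) :
    convMap k (C ⊗[k] C) ρ (toConv (mul' k A ∘ₗ map t.ofConv t.ofConv)) =
      convTensor (toConv (mul' k A ∘ₗ map t.ofConv t.ofConv))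
        (toConv (mul' k H ∘ₗ map φ.ofConv φ.ofConv)) := by
  have ht' (c : C) : ρ (t c) = ∑ i ∈ (ℛ k c).index, t ((ℛ k c).left i) ⊗ₜ φ ((ℛ k c).right i) := by
    rw [← convMap_apply, ht, convTensor, ofConv_toConv, comp_apply, ← (ℛ k c).eq]
    simp
  refine WithConv.ext (TensorProduct.ext' fun x y => ?_)
  simp only [convTensor, convMap_apply, ofConv_toConv, comp_apply, mul'_apply, map_tmul,
    map_mul, ht', TensorProduct.comul_tmul, ← (ℛ k x).eq, ← (ℛ k y).eq, TensorProduct.sum_tmul,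
    TensorProduct.tmul_sum, map_sum]
  simp [Finset.sum_mul_sum, Algebra.TensorProduct.tmul_mul_tmul,
    Finset.sum_comm (s := (ℛ k x).index)]

theorem mul'_map_convMul_constConv_convMul_apply (t u : WithConv (C →ₗ[k] A)) (b : A) (x y : C) :
    (toConv (mul' k A ∘ₗ map t.ofConv t.ofConv) * constConv k (C ⊗[k] C) b *
      toConv (mul' k A ∘ₗ map u.ofConv u.ofConv ∘ₗ (TensorProduct.comm k C C).toLinearMap))
      (x ⊗ₜ y) = (t * constConv k C ((t * constConv k C b * u) y) * u) x := by
  simp only [convMul_apply_tmul, convMul_constConv_apply,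
    convMul_constConv_convMul_apply _ _ _ (ℛ k x), convMul_constConv_convMul_apply _ _ _ (ℛ k y)]
  simp [Finset.mul_sum, Finset.sum_mul, mul_assoc]

end TensorSquare

section Hopf

variable {k A H : Type u} [CommRing k] [Ring A] [Algebra k A] [Ring H] [HopfAlgebra k H]
  {ρ : A →ₐ[k] A ⊗[k] H}

variable (k H) in
def idConvUnit : (WithConv (H →ₗ[k] H))ˣ :=
  ⟨toConv LinearMap.id, toConv (antipode k), id_mul_antipode, antipode_mul_id⟩

theorem convMap_eq_convTensor_idConvUnit {t : H →ₗ[k] A} (ht : memC21 ρ.toLinearMap t) :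
    convMap k H ρ (toConv t) = convTensor (toConv t) (idConvUnit k H : WithConv (H →ₗ[k] H)) :=
  WithConv.ext (LinearMap.ext ht)

theorem convMul_constConv_convMul_apply_one (hB : ∀ b b' : coinv ρ, b * b' = b' * b)
    {t u : WithConv (H →ₗ[k] A)}
    (ht : convMap k H ρ t = convTensor t (idConvUnit k H : WithConv (H →ₗ[k] H)))
    (htu : t * u = 1) {b : A} (hb : b ∈ coinv ρ) : (t * constConv k H b * u) 1 = b := by
  have ht1 : ρ (t 1) = t 1 ⊗ₜ 1 := by
    simpa [convMap_apply, convTensor, idConvUnit, Bialgebra.comul_one,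
      Algebra.TensorProduct.one_def] using congr($ht 1)
  have hcomm : t 1 * b = b * t 1 := congrArg Subtype.val (hB ⟨_, ht1⟩ ⟨b, hb⟩)
  calc (t * constConv k H b * u) 1 = t 1 * b * u 1 := by
        rw [convMul_apply_one, convMul_constConv_apply]
    _ = b * (t * u) 1 := by rw [hcomm, mul_assoc, convMul_apply_one]
    _ = b := by simp [htu]

theorem convMul_constConv_convMul_apply_mul [IsCocomm k H]
    (hB : ∀ b b' : coinv ρ, b * b' = b' * b) {t u : WithConv (H →ₗ[k] A)}
    (ht : convMap k H ρ t = convTensor t (idConvUnit k H : WithConv (H →ₗ[k] H)))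
    (htu : t * u = 1) (hut : u * t = 1) {b : A} (hb : b ∈ coinv ρ) (x y : H) :
    (t * constConv k H ((t * constConv k H b * u) y) * u) x =
      (t * constConv k H b * u) (x * y) := by
  -- compare the two conjugations of `b` by the cleaving maps `t(x) t(y)` and `t(x y)` of `H ⊗ H`
  set μ := Bialgebra.mulCoalgHom k H
  let φ := Units.map (convComap (A := H) μ).toMonoidHom (idConvUnit k H)
  have hμt : convMap k (H ⊗[k] H) ρ (convComap μ t) = convTensor (convComap μ t) φ := by
    rw [show convMap k (H ⊗[k] H) ρ (convComap μ t) = convComap μ (convMap k H ρ t) from rfl, ht,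
      convComap_convTensor]
    rfl
  have hα := convMap_mul'_map ht
  rw [show toConv (mul' k H ∘ₗ map (idConvUnit k H : WithConv (H →ₗ[k] H)).ofConv
      (idConvUnit k H : WithConv (H →ₗ[k] H)).ofConv) = (φ : WithConv (H ⊗[k] H →ₗ[k] H)) from
    WithConv.ext (TensorProduct.ext' fun _ _ => rfl)] at hα
  have key := convMul_convMul_eq_of_convMap_eq φ hB hμt (u := convComap μ u)
    (by rw [← map_mul, htu, map_one]) (by rw [← map_mul, hut, map_one]) hα
    (mul'_map_convMul_mul'_map_comm htu)
    (constConv_mem_coinv (C := H ⊗[k] H) hb)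
  rw [← mul'_map_convMul_constConv_convMul_apply, key, ← convComap_constConv μ, ← map_mul,
    ← map_mul]
  rfl

end Hopf

section Action

variable {k A H : Type u} [CommRing k] [Ring A] [Algebra k A] [Ring H] [HopfAlgebra k H]

variable (ρ : A →ₐ[k] A ⊗[k] H) (t u : WithConv (H →ₗ[k] A))

def coinvAction (hmem : ∀ b ∈ coinv ρ, ∀ h, (t * constConv k H b * u) h ∈ coinv ρ) :
    H →ₗ[k] coinv ρ →ₗ[k] coinv ρ :=
  LinearMap.mk₂ k (fun h b => ⟨(t * constConv k H (b : A) * u) h, hmem b b.2 h⟩)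
    (fun h h' b => by ext; simp) (fun r h b => by ext; simp)
    (fun h b b' => by ext; simp [mul_add, add_mul]) (fun r h b => by ext; simp)

theorem coe_coinvAction (hmem) (h : H) (b : coinv ρ) :
    (coinvAction ρ t u hmem h b : A) = (t * constConv k H (b : A) * u) h := rfl

end Action

theorem stmt12_module_algebra_structure_general
    {k H A : Type u} [CommRing k] [Ring H] [HopfAlgebra k H] [Ring A] [Algebra k A]
    (hcoc : ∀ h : H, (TensorProduct.comm k H H) (Coalgebra.comul (R := k) h) =
      Coalgebra.comul (R := k) h)
    (ρ : A →ₐ[k] A ⊗[k] H)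
    (hBcomm : ∀ b b' : coinv ρ, b * b' = b' * b)
    (t u : H →ₗ[k] A) (ht : memC21 ρ.toLinearMap t)
    (htu : conv t u = Algebra.linearMap k A ∘ₗ Coalgebra.counit)
    (hut : conv u t = Algebra.linearMap k A ∘ₗ Coalgebra.counit) :
    ∃ act : H →ₗ[k] (coinv ρ) →ₗ[k] (coinv ρ),
      -- `act` is given by `ω_t(h ⊗ b) = t(h₍₁₎) b u(h₍₂₎)`; in particular `ω_t` takes
      -- values in `B`
      (∀ (h : H) (b : coinv ρ) (ι : Type u) (r : Coalgebra.Repr k h ι),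
        ((act h b : A)) = ∑ i ∈ r.index, t (r.left i) * (b : A) * u (r.right i)) ∧
      -- `ω_t` is independent of the choice of the cleaving map `t`
      (∀ t₁ u₁ : H →ₗ[k] A, memC21 ρ.toLinearMap t₁ →
        conv t₁ u₁ = Algebra.linearMap k A ∘ₗ Coalgebra.counit →
        conv u₁ t₁ = Algebra.linearMap k A ∘ₗ Coalgebra.counit →
        ∀ (h : H) (b : coinv ρ) (ι : Type u) (r : Coalgebra.Repr k h ι),
          ((act h b : A)) = ∑ i ∈ r.index, t₁ (r.left i) * (b : A) * u₁ (r.right i)) ∧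
      -- `act` makes `B` into a left `H`-module algebra
      (∀ h : H, act h 1 = Coalgebra.counit (R := k) h • (1 : coinv ρ)) ∧
      (∀ (h : H) (b c : coinv ρ) (ι : Type u) (r : Coalgebra.Repr k h ι),
        act h (b * c) = ∑ i ∈ r.index, act (r.left i) b * act (r.right i) c) ∧
      (∀ b : coinv ρ, act 1 b = b) ∧
      (∀ (h h' : H) (b : coinv ρ), act h (act h' b) = act (h * h') b) := by
  have : IsCocomm k H := ⟨LinearMap.ext hcoc⟩
  have htu' : toConv t * toConv u = 1 := WithConv.ext htu
  have hut' : toConv u * toConv t = 1 := WithConv.ext hut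
  have hT := convMap_eq_convTensor_idConvUnit ht
  have hmem : ∀ b ∈ coinv ρ, ∀ h, (toConv t * constConv k H b * toConv u) h ∈ coinv ρ :=
    fun b hb => convMul_convMul_mem_coinv _ hT htu' hut' (constConv_mem_coinv hb)
  refine ⟨coinvAction ρ (toConv t) (toConv u) hmem,
    fun h b _ r => convMul_constConv_convMul_apply _ _ _ r, ?_, ?_, ?_, ?_, ?_⟩
  · intro t₁ u₁ ht₁ htu₁ _ h b _ r
    rw [coe_coinvAction, ← convMul_constConv_convMul_apply (toConv t₁) (toConv u₁) _ r,
      convMul_convMul_eq_of_convMap_eq _ hBcomm hT htu' hut' (convMap_eq_convTensor_idConvUnit ht₁)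
        (WithConv.ext htu₁) (constConv_mem_coinv b.2)]
  · intro h
    ext
    simp [coe_coinvAction, htu', Algebra.algebraMap_eq_smul_one]
  · intro h b c _ r
    ext
    push_cast [coe_coinvAction, convMul_constConv_mul_convMul hut', r.convMul_apply]
    rfl
  · intro b
    ext
    exact convMul_constConv_convMul_apply_one hBcomm hT htu' b.2
  · intro h h' b
    ext
    exact convMul_constConv_convMul_apply_mul hBcomm hT htu' hut' b.2 h h'

/-- Lemma 5.5: let `H` be a cocommutative Hopf algebra and `A` a cleft
right `H`-comodule algebra whose coinvariant algebra `B = A^{co H}` is commutative.  For a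
convolution invertible `t ∈ Hom^H(H, A)` with convolution inverse `u`, the map
`ω_t(h ⊗ b) = t(h₍₁₎) b u(h₍₂₎)` takes values in `B`, is independent of the choice of `t`,
and makes `B` into a left `H`-module algebra. -/
theorem stmt12_module_algebra_structure
    {k H A : Type u} [CommRing k] [Ring H] [HopfAlgebra k H] [Ring A] [Algebra k A]
    (hcoc : ∀ h : H, (TensorProduct.comm k H H) (Coalgebra.comul (R := k) h) =
      Coalgebra.comul (R := k) h)
    (ρ : A →ₐ[k] A ⊗[k] H) (hρ : IsCoaction ρ.toLinearMap)
    (hBcomm : ∀ b b' : coinv ρ, b * b' = b' * b)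
    (t u : H →ₗ[k] A) (ht : memC21 ρ.toLinearMap t)
    (htu : conv t u = Algebra.linearMap k A ∘ₗ Coalgebra.counit)
    (hut : conv u t = Algebra.linearMap k A ∘ₗ Coalgebra.counit) :
    ∃ act : H →ₗ[k] (coinv ρ) →ₗ[k] (coinv ρ),
      -- `act` is given by `ω_t(h ⊗ b) = t(h₍₁₎) b u(h₍₂₎)`; in particular `ω_t` takes
      -- values in `B`
      (∀ (h : H) (b : coinv ρ) (ι : Type u) (r : Coalgebra.Repr k h ι),
        ((act h b : A)) = ∑ i ∈ r.index, t (r.left i) * (b : A) * u (r.right i)) ∧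
      -- `ω_t` is independent of the choice of the cleaving map `t`
      (∀ t₁ u₁ : H →ₗ[k] A, memC21 ρ.toLinearMap t₁ →
        conv t₁ u₁ = Algebra.linearMap k A ∘ₗ Coalgebra.counit →
        conv u₁ t₁ = Algebra.linearMap k A ∘ₗ Coalgebra.counit →
        ∀ (h : H) (b : coinv ρ) (ι : Type u) (r : Coalgebra.Repr k h ι),
          ((act h b : A)) = ∑ i ∈ r.index, t₁ (r.left i) * (b : A) * u₁ (r.right i)) ∧
      -- `act` makes `B` into a left `H`-module algebra
      (∀ h : H, act h 1 = Coalgebra.counit (R := k) h • (1 : coinv ρ)) ∧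
      (∀ (h : H) (b c : coinv ρ) (ι : Type u) (r : Coalgebra.Repr k h ι),
        act h (b * c) = ∑ i ∈ r.index, act (r.left i) b * act (r.right i) c) ∧
      (∀ b : coinv ρ, act 1 b = b) ∧
      (∀ (h h' : H) (b : coinv ρ), act h (act h' b) = act (h * h') b) :=
  stmt12_module_algebra_structure_general hcoc ρ hBcomm t u ht htu hut
end
end
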